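/- Let $Q_1, Q_2$ be symmetric real $n\times n$ matrices with $Q_1$ negative semidefinite. Suppose there exists $c_0 > 0$ such that $cQ_1 + Q_2$ is negative semidefinite for all $c \ge c_0$, and suppose the set $S = \{s \in \mathbb{R} : \det(sQ_1+Q_2) = 0\}$ is finite and nonempty. Then for $c^\star = \max S$, the matrix $cQ_1 + Q_2$ is negative semidefinite for all $c \ge c^\star$. -/

import Mathlib

/-!
Write `P t = -(t • Q₁ + Q₂)`. Since `-Q₁ ⪰ 0`, `P` is increasing in the Loewner order, so the set
`T` of `t` with `P t ⪰ 0` is an up-set; it is closed, and nonempty by assumption. If some `c ≥ c⋆`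
were not in `T`, the least element `a` of `T` would satisfy `a > c ≥ c⋆`, so `P a` would be
nonsingular, hence positive definite. But positive definiteness survives a small perturbation
`P (a - ε) = P a - ε • (-Q₁)`, contradicting the minimality of `a`.
-/

open Matrix

namespace Matrix

open scoped MatrixOrder

variable {n : Type*} {Q₁ Q₂ : Matrix n n ℝ}

lemma isUpperSet_setOf_posSemidef_neg_smul_add (hQ₁ : (-Q₁).PosSemidef) :
    IsUpperSet {t : ℝ | (-(t • Q₁ + Q₂)).PosSemidef} := by
  intro t s hts ht
  have hsplit : -(s • Q₁ + Q₂) = -(t • Q₁ + Q₂) + (s - t) • -Q₁ := by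
    rw [sub_smul, smul_neg, smul_neg]
    abel
  exact (congrArg PosSemidef hsplit).mpr (ht.add (hQ₁.smul (sub_nonneg.2 hts)))

variable [Fintype n]

lemma isClosed_setOf_posSemidef : IsClosed {A : Matrix n n ℝ | A.PosSemidef} := by
  simp only [posSemidef_iff_dotProduct_mulVec, Set.ofPred_and, Set.ofPred_forall]
  exact (isClosed_eq continuous_id.matrix_conjTranspose continuous_id).inter
    (isClosed_iInter fun x => isClosed_le continuous_const (by fun_prop))

lemma isClosed_setOf_posSemidef_neg_smul_add :
    IsClosed {t : ℝ | (-(t • Q₁ + Q₂)).PosSemidef} :=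
  isClosed_setOf_posSemidef.preimage (by fun_prop)

variable [DecidableEq n]

lemma PosDef.exists_posSemidef_sub_smul_one {A : Matrix n n ℝ} (hA : A.PosDef) :
    ∃ r : ℝ, 0 < r ∧ (A - r • 1).PosSemidef := by
  cases isEmpty_or_nonempty n
  · exact ⟨1, one_pos, .of_dotProduct_mulVec_nonneg (by ext i; exact isEmptyElim i)
      fun x => by simp [dotProduct]⟩
  obtain ⟨r, hr, hrA⟩ := (CFC.exists_pos_algebraMap_le_iff hA.isHermitian.isSelfAdjoint).2 <|
    (StarOrderedRing.isStrictlyPositive_iff_spectrum_pos A).1 (isStrictlyPositive_iff_posDef.2 hA)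
  exact ⟨r, hr, by rwa [Algebra.algebraMap_eq_smul_one] at hrA⟩

lemma IsHermitian.exists_posSemidef_smul_one_sub {B : Matrix n n ℝ} (hB : B.IsHermitian) :
    ∃ l : ℝ, 0 < l ∧ (l • 1 - B).PosSemidef := by
  obtain ⟨l, hl⟩ :=
    (isCompact_iff_compactSpace.2 inferInstance : IsCompact (spectrum ℝ B)).bddAbove
  have hBl : B ≤ algebraMap ℝ _ (max l 1) :=
    le_algebraMap_of_spectrum_le (fun x hx => (hl hx).trans (le_max_left _ _)) hB.isSelfAdjoint
  exact ⟨max l 1, by positivity, by rwa [Algebra.algebraMap_eq_smul_one] at hBl⟩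

lemma PosDef.exists_posSemidef_sub_smul {A B : Matrix n n ℝ} (hA : A.PosDef)
    (hB : B.IsHermitian) : ∃ ε : ℝ, 0 < ε ∧ (A - ε • B).PosSemidef := by
  obtain ⟨r, hr, hrA⟩ := hA.exists_posSemidef_sub_smul_one
  obtain ⟨l, hl, hBl⟩ := hB.exists_posSemidef_smul_one_sub
  have hsplit : A - (r / l) • B = (A - r • 1) + (r / l) • (l • 1 - B) := by
    rw [smul_sub, smul_smul, div_mul_cancel₀ r hl.ne']
    abel
  exact ⟨r / l, div_pos hr hl, hsplit ▸ hrA.add (hBl.smul (div_pos hr hl).le)⟩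

lemma exists_lt_posSemidef_neg_smul_add (hQ₁ : (-Q₁).PosSemidef) {a : ℝ}
    (ha : (-(a • Q₁ + Q₂)).PosSemidef) (hdet : (a • Q₁ + Q₂).det ≠ 0) :
    ∃ t < a, (-(t • Q₁ + Q₂)).PosSemidef := by
  have hpos : (-(a • Q₁ + Q₂)).PosDef :=
    ha.posDef_iff_det_ne_zero.2 <| by
      rw [det_neg]
      exact mul_ne_zero (pow_ne_zero _ (by norm_num)) hdet
  obtain ⟨ε, hε, hPSD⟩ := hpos.exists_posSemidef_sub_smul hQ₁.isHermitian
  have hsplit : -((a - ε) • Q₁ + Q₂) = -(a • Q₁ + Q₂) - ε • -Q₁ := by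
    rw [sub_smul, smul_neg]
    abel
  exact ⟨a - ε, by linarith, hsplit ▸ hPSD⟩

theorem posSemidef_neg_smul_add_of_forall_lt_det_ne_zero (hQ₁ : (-Q₁).PosSemidef)
    (hT : ∃ t : ℝ, (-(t • Q₁ + Q₂)).PosSemidef) {c : ℝ}
    (hdet : ∀ t, c < t → (t • Q₁ + Q₂).det ≠ 0) {s : ℝ} (hcs : c ≤ s) :
    (-(s • Q₁ + Q₂)).PosSemidef := by
  set T := {t : ℝ | (-(t • Q₁ + Q₂)).PosSemidef}
  have hup := isUpperSet_setOf_posSemidef_neg_smul_add (Q₂ := Q₂) hQ₁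
  by_contra hs
  have hbdd : s ∈ lowerBounds T := fun t ht => le_of_not_ge fun hts => hs (hup hts ht)
  have ha : sInf T ∈ T := isClosed_setOf_posSemidef_neg_smul_add.csInf_mem hT ⟨s, hbdd⟩
  have hsa : s < sInf T := (le_csInf hT hbdd).lt_of_ne fun h => hs (h ▸ ha)
  obtain ⟨t, hta, ht⟩ := exists_lt_posSemidef_neg_smul_add hQ₁ ha (hdet _ (hcs.trans_lt hsa))
  exact hta.not_ge (csInf_le ⟨s, hbdd⟩ ht)

end Matrix

theorem smul_add_negSemidef_of_ge_max_gen_eigenvalue_general {n : ℕ}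
    (Q₁ Q₂ : Matrix (Fin n) (Fin n) ℝ)
    (hQ₁ : (-Q₁).PosSemidef)
    (hlarge : ∃ c₀ : ℝ, 0 < c₀ ∧ ∀ c : ℝ, c₀ ≤ c → (-(c • Q₁ + Q₂)).PosSemidef)
    (S : Set ℝ) (hS : S = {s : ℝ | (s • Q₁ + Q₂).det = 0})
    (cstar : ℝ) (hcmax : ∀ s ∈ S, s ≤ cstar) :
    ∀ c : ℝ, cstar ≤ c → (-(c • Q₁ + Q₂)).PosSemidef := by
  obtain ⟨c₀, -, hc₀⟩ := hlarge
  have hdet : ∀ t, cstar < t → (t • Q₁ + Q₂).det ≠ 0 := fun t ht hzero =>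
    ht.not_ge (hcmax t (hS ▸ hzero))
  exact fun c hc =>
    posSemidef_neg_smul_add_of_forall_lt_det_ne_zero hQ₁ ⟨c₀, hc₀ c₀ le_rfl⟩ hdet hc

/-- If `Q₁ ⪯ 0`, `Q₂` symmetric, `c Q₁ + Q₂ ⪯ 0` for all sufficiently large `c`,
and the set `S` of finite generalized eigenvalues of the pencil is finite and
nonempty, then `c Q₁ + Q₂ ⪯ 0` for all `c ≥ max S`. -/
theorem smul_add_negSemidef_of_ge_max_gen_eigenvalue {n : ℕ}
    (Q₁ Q₂ : Matrix (Fin n) (Fin n) ℝ)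
    (hQ₁s : Q₁.IsSymm) (hQ₂s : Q₂.IsSymm)
    (hQ₁ : (-Q₁).PosSemidef)
    (hlarge : ∃ c₀ : ℝ, 0 < c₀ ∧ ∀ c : ℝ, c₀ ≤ c → (-(c • Q₁ + Q₂)).PosSemidef)
    (S : Set ℝ) (hS : S = {s : ℝ | (s • Q₁ + Q₂).det = 0})
    (hfin : S.Finite) (hne : S.Nonempty)
    (cstar : ℝ) (hcmem : cstar ∈ S) (hcmax : ∀ s ∈ S, s ≤ cstar) :
    ∀ c : ℝ, cstar ≤ c → (-(c • Q₁ + Q₂)).PosSemidef :=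
  smul_add_negSemidef_of_ge_max_gen_eigenvalue_general Q₁ Q₂ hQ₁ hlarge S hS cstar hcmax
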